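/- The Tiles UPB in ℂ³⊗ℂ³ is unextendible: there is no product state u⊗v (u,v ∈ ℂ³ nonzero) orthogonal to all five states |ψ₁⟩,…,|ψ₅⟩. -/

import Mathlib

noncomputable section

def ket {d : ℕ} (i : Fin d) : Fin d → ℂ := fun x => if x = i then 1 else 0

def tens {d₁ d₂ : ℕ} (u : Fin d₁ → ℂ) (v : Fin d₂ → ℂ) : Fin d₁ × Fin d₂ → ℂ :=
  fun p => u p.1 * v p.2

def inn {n : Type*} [Fintype n] (u v : n → ℂ) : ℂ := ∑ x, star (u x) * v x

def mm (i j : Fin 3) : Fin 3 → ℂ := fun x =>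
  if x = i then (Real.sqrt 2 : ℂ)⁻¹ else if x = j then -(Real.sqrt 2 : ℂ)⁻¹ else 0

def uni : Fin 3 → ℂ := fun _ => (Real.sqrt 3 : ℂ)⁻¹

/-- The five-state Tiles unextendible product basis in `ℂ³⊗ℂ³`. -/
def tiles : Fin 5 → (Fin 3 × Fin 3 → ℂ) :=
  ![tens (ket 0) (mm 0 1), tens (ket 2) (mm 1 2),
    tens (mm 0 1) (ket 2), tens (mm 1 2) (ket 0),
    tens uni uni]

/-! Since `⟨a ⊗ b, u ⊗ v⟩ = ⟨a, u⟩ ⟨b, v⟩`, a product vector `u ⊗ v` orthogonal to the five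
tiles must, for each tile, be orthogonal to its left factor through `u` or to its right factor
through `v`. By pigeonhole `u` is orthogonal to three of the left factors or `v` to three of the
right ones, and any three left (resp. right) factors span `ℂ³`, forcing `u = 0` or `v = 0`. -/

theorem inn_tens_tens {d₁ d₂ : ℕ} (a u : Fin d₁ → ℂ) (b v : Fin d₂ → ℂ) :
    inn (tens a b) (tens u v) = inn a u * inn b v := by
  simp only [inn, tens, Fintype.sum_prod_type, Finset.sum_mul_sum, star_mul']
  exact Finset.sum_congr rfl fun _ _ => Finset.sum_congr rfl fun _ _ => by ring

theorem inn_tens_tens_eq_zero_iff {d₁ d₂ : ℕ} (a u : Fin d₁ → ℂ) (b v : Fin d₂ → ℂ) :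
    inn (tens a b) (tens u v) = 0 ↔ inn a u = 0 ∨ inn b v = 0 := by
  rw [inn_tens_tens, mul_eq_zero]

theorem inn_ket {d : ℕ} (i : Fin d) (u : Fin d → ℂ) : inn (ket i) u = u i := by
  simp [inn, ket]

theorem inn_mm {i j : Fin 3} (hij : i ≠ j) (u : Fin 3 → ℂ) :
    inn (mm i j) u = (Real.sqrt 2 : ℂ)⁻¹ * (u i - u j) := by
  simp only [inn, mm, Fin.sum_univ_three]
  fin_cases i <;> fin_cases j <;> simp at hij ⊢ <;> ring

theorem inn_mm_eq_zero_iff {i j : Fin 3} (hij : i ≠ j) (u : Fin 3 → ℂ) :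
    inn (mm i j) u = 0 ↔ u i = u j := by
  simp [inn_mm hij, sub_eq_zero]

theorem inn_uni (u : Fin 3 → ℂ) : inn uni u = (Real.sqrt 3 : ℂ)⁻¹ * (u 0 + u 1 + u 2) := by
  simp only [inn, uni, Fin.sum_univ_three, star_inv₀, Complex.star_def, Complex.conj_ofReal]
  ring

theorem inn_uni_eq_zero_iff (u : Fin 3 → ℂ) : inn uni u = 0 ↔ u 0 + u 1 + u 2 = 0 := by
  simp [inn_uni]

theorem eq_zero_or_eq_zero_of_tiles_conditions (u v : Fin 3 → ℂ)
    (h₁ : u 0 = 0 ∨ v 0 = v 1) (h₂ : u 2 = 0 ∨ v 1 = v 2) (h₃ : u 0 = u 1 ∨ v 2 = 0)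
    (h₄ : u 1 = u 2 ∨ v 0 = 0) (h₅ : u 0 + u 1 + u 2 = 0 ∨ v 0 + v 1 + v 2 = 0) :
    u = 0 ∨ v = 0 := by
  suffices (u 0 = 0 ∧ u 1 = 0 ∧ u 2 = 0) ∨ (v 0 = 0 ∧ v 1 = 0 ∧ v 2 = 0) by
    refine this.imp (fun h => ?_) (fun h => ?_) <;>
      funext x <;> fin_cases x <;> simp [h]
  rcases h₁ with h₁ | h₁ <;> rcases h₂ with h₂ | h₂ <;> rcases h₃ with h₃ | h₃ <;>
    rcases h₄ with h₄ | h₄ <;> rcases h₅ with h₅ | h₅ <;> grind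

/-- The Tiles UPB is unextendible: no nonzero product state `u⊗v` is orthogonal to all
five of its members. -/
theorem tiles_unextendible :
    ¬ ∃ u v : Fin 3 → ℂ, u ≠ 0 ∧ v ≠ 0 ∧ ∀ i : Fin 5, inn (tiles i) (tens u v) = 0 := by
  rintro ⟨u, v, hu, hv, h⟩
  have h₁ : u 0 = 0 ∨ v 0 = v 1 := by
    simpa [tiles, inn_tens_tens_eq_zero_iff, inn_ket, inn_mm_eq_zero_iff] using h 0
  have h₂ : u 2 = 0 ∨ v 1 = v 2 := by
    simpa [tiles, inn_tens_tens_eq_zero_iff, inn_ket, inn_mm_eq_zero_iff] using h 1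
  have h₃ : u 0 = u 1 ∨ v 2 = 0 := by
    simpa [tiles, inn_tens_tens_eq_zero_iff, inn_ket, inn_mm_eq_zero_iff] using h 2
  have h₄ : u 1 = u 2 ∨ v 0 = 0 := by
    simpa [tiles, inn_tens_tens_eq_zero_iff, inn_ket, inn_mm_eq_zero_iff] using h 3
  have h₅ : u 0 + u 1 + u 2 = 0 ∨ v 0 + v 1 + v 2 = 0 := by
    simpa [tiles, inn_tens_tens_eq_zero_iff, inn_uni_eq_zero_iff] using h 4
  exact (eq_zero_or_eq_zero_of_tiles_conditions u v h₁ h₂ h₃ h₄ h₅).elim hu hv
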